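/- Let P : C^op → Pos be a slat-doctrine over a category C with finite products, whose fibres have finite meets preserved by reindexing. Then the existential completion P^ex satisfies the Rule of Choice: if ⊤_A ≤ ∃_{pr_A}(A,B,α') in P^ex(A) — concretely, if ⊤ ≤ (A,B,α) holds in P^ex(A) for α ∈ P(A×B) — then there exists an arrow f : A → B of C (a witness) such that ⊤_A ≤ P_{⟨1_A,f⟩}(α) in P(A). -/

import Mathlib

/-! A proof of `⊤ ≤ (A,B,α)` in `P^ex(A)` is an arrow `f : A × 1 ⟶ B` with
`⊤ ≤ P⟨pr_A,f⟩(α)`; reindexing along the section `⟨1_A,!⟩ : A ⟶ A × 1`, which preserves `⊤`,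
turns it into the witness `⟨1_A,!⟩ ≫ f : A ⟶ B`. -/

open CategoryTheory CategoryTheory.Limits Opposite

universe u v

variable {C : Type u} [Category.{v} C] [HasFiniteProducts C]

/-- The fibre of a slat-doctrine `P : Cᵒᵖ ⥤ Pos` over an object `X` of `C`. -/
abbrev Fib (P : Cᵒᵖ ⥤ PartOrd) (X : C) : Type _ := (P.obj (op X) : Type _)

/-- Reindexing along `f : X ⟶ Y` (the monotone map `P f : P Y → P X`). -/
def rIdx (P : Cᵒᵖ ⥤ PartOrd) {X Y : C} (f : X ⟶ Y) (a : Fib P Y) : Fib P X :=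
  (P.map f.op).hom.toFun a

/-- Objects of the fibre of a quantifier completion over `A`: triples `(A, B, α)`
with `α ∈ P (A × B)` (the component `A` being fixed). -/
abbrev QObj (P : Cᵒᵖ ⥤ PartOrd) (A : C) : Type _ := Σ B : C, Fib P (A ⨯ B)

/-- The order of the universal completion `P^un`:
`(A,B,α) ≤ (A,C,γ)` iff there is `g : A×C ⟶ B` with `P⟨pr_A,g⟩(α) ≤ γ`. -/
def UnLe (P : Cᵒᵖ ⥤ PartOrd) {A : C} (x y : QObj P A) : Prop :=
  ∃ g : A ⨯ y.1 ⟶ x.1, rIdx P (prod.lift prod.fst g) x.2 ≤ y.2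

/-- The order of the existential completion `P^ex`:
`(A,B,α) ≤ (A,C,γ)` iff there is `f : A×B ⟶ C` with `α ≤ P⟨pr_A,f⟩(γ)`. -/
def ExLe (P : Cᵒᵖ ⥤ PartOrd) {A : C} (x y : QObj P A) : Prop :=
  ∃ f : A ⨯ x.1 ⟶ y.1, x.2 ≤ rIdx P (prod.lift prod.fst f) y.2

/-- Reindexing of the completions along `f : X ⟶ Y`: `(Y,D,δ) ↦ (X,D,P_{f×1}(δ))`. -/
noncomputable def QReindex (P : Cᵒᵖ ⥤ PartOrd) {X Y : C} (f : X ⟶ Y) (y : QObj P Y) :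
    QObj P X :=
  ⟨y.1, rIdx P (prod.map f (𝟙 y.1)) y.2⟩

section Reindexing

variable (P : Cᵒᵖ ⥤ PartOrd)

omit [HasFiniteProducts C] in
lemma rIdx_comp {X Y Z : C} (g : X ⟶ Y) (k : Y ⟶ Z) (a : Fib P Z) :
    rIdx P (g ≫ k) a = rIdx P g (rIdx P k a) := by
  simp only [rIdx, op_comp, Functor.map_comp]
  rfl

omit [HasFiniteProducts C] in
lemma rIdx_monotone {X Y : C} (f : X ⟶ Y) : Monotone (rIdx P f) :=
  (P.map f.op).hom.monotone

end Reindexing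

lemma ExLe.exists_lift_le {P : Cᵒᵖ ⥤ PartOrd} {A : C} {x y : QObj P A} (h : ExLe P x y)
    (s : A ⟶ x.1) :
    ∃ f : A ⟶ y.1, rIdx P (prod.lift (𝟙 A) s) x.2 ≤ rIdx P (prod.lift (𝟙 A) f) y.2 := by
  obtain ⟨f, hf⟩ := h
  refine ⟨prod.lift (𝟙 A) s ≫ f, ?_⟩
  have hlift : prod.lift (𝟙 A) (prod.lift (𝟙 A) s ≫ f)
      = prod.lift (𝟙 A) s ≫ prod.lift prod.fst f := by
    rw [prod.comp_lift, prod.lift_fst]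
  rw [hlift, rIdx_comp]
  exact rIdx_monotone P _ hf

theorem exCompletion_rule_of_choice_general (P : Cᵒᵖ ⥤ PartOrd)
    (T : ∀ X : C, Fib P X)
    (hTpres : ∀ {X Y : C} (f : X ⟶ Y), rIdx P f (T Y) = T X)
    (A B : C) (α : Fib P (A ⨯ B))
    (h : ExLe P (⟨⊤_ C, T (A ⨯ ⊤_ C)⟩ : QObj P A) ⟨B, α⟩) :
    ∃ f : A ⟶ B, T A ≤ rIdx P (prod.lift (𝟙 A) f) α := by
  obtain ⟨f, hf⟩ := h.exists_lift_le (terminal.from A)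
  exact ⟨f, hTpres (prod.lift (𝟙 A) (terminal.from A)) ▸ hf⟩

/-- Rule of Choice for the existential completion: if the fibres of `P` have finite meets
(binary meets `inf` and a top `T`) preserved by reindexing, and `⊤ ≤ (A,B,α)` holds in
`P^ex(A)`, then there is a witness `f : A ⟶ B` with `⊤_A ≤ P⟨1_A,f⟩(α)`. -/
theorem exCompletion_rule_of_choice (P : Cᵒᵖ ⥤ PartOrd)
    (T : ∀ X : C, Fib P X)
    (hT : ∀ (X : C) (a : Fib P X), a ≤ T X)
    (hTpres : ∀ {X Y : C} (f : X ⟶ Y), rIdx P f (T Y) = T X)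
    (inf : ∀ X : C, Fib P X → Fib P X → Fib P X)
    (inf_le_left : ∀ (X : C) (a b : Fib P X), inf X a b ≤ a)
    (inf_le_right : ∀ (X : C) (a b : Fib P X), inf X a b ≤ b)
    (le_inf : ∀ (X : C) (c a b : Fib P X), c ≤ a → c ≤ b → c ≤ inf X a b)
    (hpres : ∀ {X Y : C} (f : X ⟶ Y) (a b : Fib P Y),
      rIdx P f (inf Y a b) = inf X (rIdx P f a) (rIdx P f b))
    (A B : C) (α : Fib P (A ⨯ B))
    (h : ExLe P (⟨⊤_ C, T (A ⨯ ⊤_ C)⟩ : QObj P A) ⟨B, α⟩) :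
    ∃ f : A ⟶ B, T A ≤ rIdx P (prod.lift (𝟙 A) f) α :=
  exCompletion_rule_of_choice_general P T hTpres A B α h
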